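/- Let p ≡ 1 (mod 4) be prime and let u(n) be defined by u(0)=1 and u(n) = ∏_{i=1}^{n}(4i-1)^2 − Σ_{m=0}^{n-1} C(2n+1,2m+1) (∏_{j=1}^{n-m}(4j-3)^2) u(m). Then u(n) ≡ 0 (mod p) for all n ≥ (p+1)/2. -/

import Mathlib

/-!
Work in `ZMod p` with `h = (p - 1) / 2`, so that `2h + 1 = p`, and write `A n = ∏ (4i-1)²`,
`B k = ∏ (4j-3)²`. Since `p ∣ C(p, 2m+1)` for `m < h`, the recurrence gives `u h = A h`.
As `4(h + j) - 1 = 4j - 3 + 2p`, we have `A n = A h * B (n - h)` for `n ≥ h`, and `B k = 0` once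
`k ≥ (p + 3)/4`. For `n > h`, Lucas' theorem gives `C(2n+1, 2m+1) ≡ C(2(n-h), 2m+1)` for `m < h`,
which is `0` whenever `B (n - m) ≠ 0`, and `C(2n+1, p) ≡ 1` whenever `B (n - h) ≠ 0`. By strong
induction only the term `m = h` survives, and the recurrence reads `u n = A n - B (n - h) * A h = 0`.
-/

open Finset

def SatisfiesRomikRecurrence {R : Type*} [CommRing R] (v : ℕ → R) : Prop :=
  ∀ n, 1 ≤ n → v n = (∏ i ∈ Icc 1 n, (4 * (i : R) - 1) ^ 2)
    - ∑ m ∈ range n, ((2 * n + 1).choose (2 * m + 1) : R)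
        * (∏ j ∈ Icc 1 (n - m), (4 * (j : R) - 3) ^ 2) * v m

theorem SatisfiesRomikRecurrence.map {R S : Type*} [CommRing R] [CommRing S] (f : R →+* S)
    {v : ℕ → R} (hv : SatisfiesRomikRecurrence v) : SatisfiesRomikRecurrence (f ∘ v) := by
  intro n hn
  simp [hv n hn, map_prod, map_sum, map_ofNat]

theorem prod_Icc_four_mul_sub_three_sq_eq_zero {p : ℕ} (hp4 : p % 4 = 1) {k : ℕ}
    (hk : (p + 3) / 4 ≤ k) : ∏ j ∈ Icc 1 k, (4 * (j : ZMod p) - 3) ^ 2 = 0 := by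
  refine prod_eq_zero (i := (p + 3) / 4) (mem_Icc.mpr ⟨by omega, hk⟩) ?_
  have h : ((4 * ((p + 3) / 4) : ℕ) : ZMod p) = 3 := by
    rw [show 4 * ((p + 3) / 4) = p + 3 by omega]
    simp
  push_cast at h
  simp [h]

theorem prod_Icc_four_mul_sub_one_sq_eq_mul {p : ℕ} (hp : p % 2 = 1) {n : ℕ}
    (hn : (p - 1) / 2 ≤ n) :
    ∏ i ∈ Icc 1 n, (4 * (i : ZMod p) - 1) ^ 2 =
      (∏ i ∈ Icc 1 ((p - 1) / 2), (4 * (i : ZMod p) - 1) ^ 2) *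
        ∏ j ∈ Icc 1 (n - (p - 1) / 2), (4 * (j : ZMod p) - 3) ^ 2 := by
  induction n, hn using Nat.le_induction with
  | base => simp
  | succ n hn ih =>
    have hshift : 4 * ((n + 1 : ℕ) : ZMod p) - 1 =
        4 * ((n - (p - 1) / 2 + 1 : ℕ) : ZMod p) - 3 := by
      have e : ((4 * (n + 1) + 2 : ℕ) : ZMod p) =
          ((4 * (n - (p - 1) / 2 + 1) + 2 * p : ℕ) : ZMod p) := by
        congr 1
        omega
      push_cast at e ⊢
      linear_combination e + 2 * ZMod.natCast_self p
    rw [prod_Icc_succ_top (by omega), ih, show n + 1 - (p - 1) / 2 = n - (p - 1) / 2 + 1 by omega,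
      prod_Icc_succ_top (by omega), hshift]
    ring

theorem cast_choose_prime_add {p a : ℕ} [Fact p.Prime] (ha : a < p) (b : ℕ) :
    ((p + a).choose b : ZMod p) = a.choose (b % p) * (1).choose (b / p) := by
  have H := Choose.choose_modEq_choose_mod_mul_choose_div_nat (p := p) (n := p + a) (k := b)
  rw [Nat.add_mod_left, Nat.mod_eq_of_lt ha, Nat.add_div_left _ (Fact.out : p.Prime).pos,
    Nat.div_eq_of_lt ha] at H
  exact_mod_cast (ZMod.natCast_eq_natCast_iff _ _ _).mpr H

theorem cast_choose_mul_prod_eq_zero {p : ℕ} [Fact p.Prime] (hp4 : p % 4 = 1) {m n : ℕ}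
    (hm : m < (p - 1) / 2) (hn : (p - 1) / 2 < n) :
    ((2 * n + 1).choose (2 * m + 1) : ZMod p) *
      ∏ j ∈ Icc 1 (n - m), (4 * (j : ZMod p) - 3) ^ 2 = 0 := by
  rcases le_or_gt ((p + 3) / 4) (n - m) with hlarge | hsmall
  · rw [prod_Icc_four_mul_sub_three_sq_eq_zero hp4 hlarge, mul_zero]
  · have hb : 2 * m + 1 < p := by omega
    rw [show 2 * n + 1 = p + 2 * (n - (p - 1) / 2) by omega, cast_choose_prime_add (by omega),
      Nat.mod_eq_of_lt hb, Nat.div_eq_of_lt hb, Nat.choose_eq_zero_of_lt (by omega)]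
    simp

theorem cast_choose_prime_mul_prod_eq {p : ℕ} [Fact p.Prime] (hp4 : p % 4 = 1) {n : ℕ}
    (hn : (p - 1) / 2 < n) :
    ((2 * n + 1).choose p : ZMod p) * ∏ j ∈ Icc 1 (n - (p - 1) / 2), (4 * (j : ZMod p) - 3) ^ 2 =
      ∏ j ∈ Icc 1 (n - (p - 1) / 2), (4 * (j : ZMod p) - 3) ^ 2 := by
  rcases le_or_gt ((p + 3) / 4) (n - (p - 1) / 2) with hlarge | hsmall
  · rw [prod_Icc_four_mul_sub_three_sq_eq_zero hp4 hlarge, mul_zero]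
  · rw [show 2 * n + 1 = p + 2 * (n - (p - 1) / 2) by omega, cast_choose_prime_add (by omega),
      Nat.mod_self, Nat.div_self (Fact.out : p.Prime).pos]
    simp

namespace SatisfiesRomikRecurrence

variable {p : ℕ} [Fact p.Prime] {v : ℕ → ZMod p}

theorem eq_prod_at_half (hp : p % 2 = 1) (hv : SatisfiesRomikRecurrence v) :
    v ((p - 1) / 2) = ∏ i ∈ Icc 1 ((p - 1) / 2), (4 * (i : ZMod p) - 1) ^ 2 := by
  have hp2 := (Fact.out : p.Prime).two_le
  rw [hv _ (by omega), sub_eq_self]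
  refine sum_eq_zero fun m hm => ?_
  rw [mem_range] at hm
  have hchoose : ((2 * ((p - 1) / 2) + 1).choose (2 * m + 1) : ZMod p) = 0 := by
    rw [ZMod.natCast_eq_zero_iff, show 2 * ((p - 1) / 2) + 1 = p by omega]
    exact (Fact.out : p.Prime).dvd_choose_self (by omega) (by omega)
  rw [hchoose, zero_mul, zero_mul]

theorem eq_zero_of_half_lt (hp4 : p % 4 = 1) (hv : SatisfiesRomikRecurrence v) (n : ℕ)
    (hn : (p - 1) / 2 < n) : v n = 0 := by
  induction n using Nat.strong_induction_on with
  | _ n ih =>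
    set h := (p - 1) / 2
    have hsum : ∑ m ∈ range n, ((2 * n + 1).choose (2 * m + 1) : ZMod p)
          * (∏ j ∈ Icc 1 (n - m), (4 * (j : ZMod p) - 3) ^ 2) * v m =
        ((2 * n + 1).choose p : ZMod p)
          * (∏ j ∈ Icc 1 (n - h), (4 * (j : ZMod p) - 3) ^ 2) * v h := by
      rw [sum_eq_single_of_mem h (mem_range.mpr hn), show 2 * h + 1 = p by omega]
      intro m hm hmh
      rcases lt_or_gt_of_ne hmh with hlt | hgt
      · rw [cast_choose_mul_prod_eq_zero hp4 hlt hn, zero_mul]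
      · rw [ih m (mem_range.mp hm) hgt, mul_zero]
    rw [hv n (by omega), hsum, cast_choose_prime_mul_prod_eq hp4 hn,
      hv.eq_prod_at_half (by omega), prod_Icc_four_mul_sub_one_sq_eq_mul (by omega) hn.le,
      mul_comm, sub_self]

end SatisfiesRomikRecurrence

theorem u_vanishes_general (p : ℕ) (hp : p.Prime) (hp4 : p % 4 = 1)
    (u : ℕ → ℤ)
    (hu : ∀ n, 1 ≤ n → u n = (∏ i ∈ Finset.Icc 1 n, (4 * (i : ℤ) - 1) ^ 2)
      - ∑ m ∈ Finset.range n, ((2 * n + 1).choose (2 * m + 1) : ℤ)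
          * (∏ j ∈ Finset.Icc 1 (n - m), (4 * (j : ℤ) - 3) ^ 2) * u m) :
    ∀ n, (p + 1) / 2 ≤ n → u n ≡ 0 [ZMOD (p : ℤ)] := by
  have := Fact.mk hp
  intro n hn
  rw [Int.modEq_zero_iff_dvd, ← ZMod.intCast_zmod_eq_zero_iff_dvd]
  exact (SatisfiesRomikRecurrence.map (Int.castRingHom (ZMod p)) hu).eq_zero_of_half_lt hp4 n
    (by omega)

/-- For a prime `p ≡ 1 (mod 4)`, Romik's sequence `u` vanishes mod `p` for all
`n ≥ (p+1)/2` (Scherer's conjecture). -/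
theorem u_vanishes (p : ℕ) (hp : p.Prime) (hp4 : p % 4 = 1)
    (u : ℕ → ℤ) (hu0 : u 0 = 1)
    (hu : ∀ n, 1 ≤ n → u n = (∏ i ∈ Finset.Icc 1 n, (4 * (i : ℤ) - 1) ^ 2)
      - ∑ m ∈ Finset.range n, ((2 * n + 1).choose (2 * m + 1) : ℤ)
          * (∏ j ∈ Finset.Icc 1 (n - m), (4 * (j : ℤ) - 3) ^ 2) * u m) :
    ∀ n, (p + 1) / 2 ≤ n → u n ≡ 0 [ZMOD (p : ℤ)] :=
  u_vanishes_general p hp hp4 u hu
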